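/- arXiv:1909.05545 — 4 statements merged into one kernel-verified Lean document; each statement's English description precedes it below -/
import Mathlib

section
/- Let f : I → ℝ be a function on an open interval I, right differentiable at x ∈ I with right derivative f'⁺(x). If (uₙ), (vₙ) are sequences with x < uₙ < vₙ for all n, vₙ → x, and limsupₙ (uₙ - x)/(vₙ - uₙ) < ∞, then (f(vₙ) - f(uₙ))/(vₙ - uₙ) → f'⁺(x). -/
open Filter Topology

theorem stmt1 (I : Set ℝ) (hIopen : IsOpen I) (hIconn : I.OrdConnected)
    (f : ℝ → ℝ) (x : ℝ) (hx : x ∈ I) (d : ℝ)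
    (hf : HasDerivWithinAt f d (Set.Ici x) x)
    (u v : ℕ → ℝ) (h1 : ∀ n, x < u n) (h2 : ∀ n, u n < v n)
    (hv : Tendsto v atTop (𝓝 x))
    (hbd : ∃ C : ℝ, ∀ᶠ n in atTop, (u n - x) / (v n - u n) ≤ C) :
    Tendsto (fun n => (f (v n) - f (u n)) / (v n - u n)) atTop (𝓝 d) := by
  obtain ⟨C, hC⟩ := hbd
  have hu : Tendsto u atTop (𝓝 x) :=
    tendsto_of_tendsto_of_tendsto_of_le_of_le tendsto_const_nhds hv
      (fun n => (h1 n).le) (fun n => (h2 n).le)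
  have hslope : Tendsto (slope f x) (𝓝[Set.Ici x \ {x}] x) (𝓝 d) :=
    hasDerivWithinAt_iff_tendsto_slope.1 hf
  have hmemu : ∀ n, u n ∈ Set.Ici x \ {x} := fun n => ⟨(h1 n).le, (h1 n).ne'⟩
  have hmemv : ∀ n, v n ∈ Set.Ici x \ {x} := fun n =>
    ⟨((h1 n).trans (h2 n)).le, ((h1 n).trans (h2 n)).ne'⟩
  have hsu : Tendsto (fun n => slope f x (u n)) atTop (𝓝 d) :=
    hslope.comp (tendsto_nhdsWithin_iff.2 ⟨hu, Eventually.of_forall hmemu⟩)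
  have hsv : Tendsto (fun n => slope f x (v n)) atTop (𝓝 d) :=
    hslope.comp (tendsto_nhdsWithin_iff.2 ⟨hv, Eventually.of_forall hmemv⟩)
  set a : ℕ → ℝ := fun n => (v n - x) / (v n - u n) with ha
  set b : ℕ → ℝ := fun n => (u n - x) / (v n - u n) with hb
  have hvu : ∀ n, (0:ℝ) < v n - u n := fun n => sub_pos.2 (h2 n)
  have hb0 : ∀ n, 0 ≤ b n := fun n => div_nonneg (sub_nonneg.2 (h1 n).le) (hvu n).le
  have hab : ∀ n, a n = b n + 1 := by
    intro n
    simp only [ha, hb]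
    rw [div_add_one (hvu n).ne']
    congr 1
    ring
  have hbbd : IsBoundedUnder (· ≤ ·) atTop fun n => ‖b n‖ := by
    refine ⟨C, eventually_map.2 ?_⟩
    filter_upwards [hC] with n hn
    simpa [Real.norm_eq_abs, abs_of_nonneg (hb0 n)] using hn
  have habd : IsBoundedUnder (· ≤ ·) atTop fun n => ‖a n‖ := by
    refine ⟨C + 1, eventually_map.2 ?_⟩
    filter_upwards [hC] with n hn
    have : a n ≤ C + 1 := by rw [hab n]; linarith [hn]
    have h0 : 0 ≤ a n := div_nonneg (by linarith [(h1 n), (h2 n)]) (hvu n).le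
    simpa [Real.norm_eq_abs, abs_of_nonneg h0]
  have hsv0 : Tendsto (fun n => slope f x (v n) - d) atTop (𝓝 0) := by
    simpa using hsv.sub_const d
  have hsu0 : Tendsto (fun n => slope f x (u n) - d) atTop (𝓝 0) := by
    simpa using hsu.sub_const d
  have t1 : Tendsto (fun n => (slope f x (v n) - d) * a n) atTop (𝓝 0) :=
    hsv0.zero_mul_isBoundedUnder_le habd
  have t2 : Tendsto (fun n => (slope f x (u n) - d) * b n) atTop (𝓝 0) :=
    hsu0.zero_mul_isBoundedUnder_le hbbd
  have key : Tendsto (fun n => (slope f x (v n) - d) * a n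
      - (slope f x (u n) - d) * b n + d) atTop (𝓝 d) := by
    have := (t1.sub t2).add_const d
    simpa using this
  refine key.congr' ?_
  filter_upwards with n
  have hvx : v n - x ≠ 0 := sub_ne_zero.2 ((h1 n).trans (h2 n)).ne'
  have hux : u n - x ≠ 0 := sub_ne_zero.2 (h1 n).ne'
  simp only [slope_def_field, ha, hb]
  field_simp [(hvu n).ne']
  ring
end

section
/- Let r ≥ 2 be an integer and w = (wₙ) a sequence of reals such that the series ∑ wₙ/rⁿ converges absolutely, and suppose wₙ does not converge to 0. Then the function f(x) = ∑ₙ (wₙ/rⁿ) φ(rⁿ x), where φ(t) is the distance from t to the nearest integer, is nowhere differentiable on [0,1]. -/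
open Filter Topology

/-- Distance from `t` to the nearest integer. -/
noncomputable def nearestIntDist (t : ℝ) : ℝ := |t - round t|

namespace NDAux

lemma nid_nonneg (t : ℝ) : 0 ≤ nearestIntDist t := abs_nonneg _

lemma nid_le_one (t : ℝ) : nearestIntDist t ≤ 1 :=
  (abs_sub_round t).trans (by norm_num)

lemma nid_add_int (t : ℝ) (k : ℤ) : nearestIntDist (t + k) = nearestIntDist t := by
  unfold nearestIntDist
  rw [round_add_intCast]
  congr 1
  push_cast
  ring

lemma nid_eval_lo (q : ℤ) (t : ℝ) (h1 : (q:ℝ) ≤ t) (h2 : t ≤ q + 1/2) :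
    nearestIntDist t = t - q := by
  unfold nearestIntDist
  rcases lt_or_eq_of_le h2 with h | h
  · have hr : round t = q := by
      rw [round_eq]
      apply Int.floor_eq_iff.mpr
      constructor
      · linarith
      · push_cast; linarith
    rw [hr, abs_of_nonneg (by linarith)]
  · have hr : round t = q + 1 := by
      rw [round_eq, h, show (q:ℝ) + 1/2 + 1/2 = ((q+1 : ℤ):ℝ) by push_cast; ring]
      exact Int.floor_intCast _
    rw [hr, h]
    push_cast
    rw [abs_of_nonpos (by linarith)]
    ring

lemma nid_eval_hi (q : ℤ) (t : ℝ) (h1 : (q:ℝ) + 1/2 ≤ t) (h2 : t ≤ q + 1) :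
    nearestIntDist t = q + 1 - t := by
  unfold nearestIntDist
  have hr : round t = q + 1 := by
    rw [round_eq]
    apply Int.floor_eq_iff.mpr
    constructor
    · push_cast; linarith
    · push_cast; linarith
  rw [hr]
  push_cast
  rw [abs_of_nonpos (by linarith)]
  ring

noncomputable def slp (p : ℤ) : ℝ := if Even p then 1 else -1

lemma abs_slp (p : ℤ) : |slp p| = 1 := by
  unfold slp; split <;> simp

lemma nid_cell {p : ℤ} {A B : ℝ} (hA1 : (p:ℝ)/2 ≤ A) (hA2 : A ≤ ((p:ℝ)+1)/2)
    (hB1 : (p:ℝ)/2 ≤ B) (hB2 : B ≤ ((p:ℝ)+1)/2) :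
    nearestIntDist B - nearestIntDist A = slp p * (B - A) := by
  rcases Int.even_or_odd p with hp | hp
  · obtain ⟨q, hq⟩ := hp
    have hc : (p:ℝ) = 2*q := by rw [hq]; push_cast; ring
    rw [hc] at hA1 hA2 hB1 hB2
    rw [nid_eval_lo q A (by linarith) (by linarith),
        nid_eval_lo q B (by linarith) (by linarith)]
    rw [slp, if_pos (by exact hq ▸ ⟨q, rfl⟩)]
    ring
  · obtain ⟨q, hq⟩ := hp
    have hc : (p:ℝ) = 2*q+1 := by rw [hq]; push_cast; ring
    rw [hc] at hA1 hA2 hB1 hB2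
    rw [nid_eval_hi q A (by linarith) (by linarith),
        nid_eval_hi q B (by linarith) (by linarith)]
    rw [slp, if_neg (by rw [Int.even_iff]; omega)]
    ring

lemma summable_term {r : ℕ} (hr : 2 ≤ r) {w : ℕ → ℝ}
    (hw : Summable (fun n => |w n| / (r:ℝ)^n)) (y : ℝ) :
    Summable (fun n => w n / (r:ℝ)^n * nearestIntDist ((r:ℝ)^n * y)) := by
  have hR0 : (0:ℝ) < (r:ℝ) := by
    have : (2:ℝ) ≤ r := by exact_mod_cast hr
    linarith
  apply Summable.of_norm_bounded hw
  intro n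
  have h1 : (0:ℝ) < (r:ℝ)^n := by positivity
  rw [Real.norm_eq_abs, abs_mul, abs_div, abs_of_nonneg (nid_nonneg _),
    abs_of_pos h1]
  calc |w n| / (r:ℝ)^n * nearestIntDist ((r:ℝ)^n * y)
      ≤ |w n| / (r:ℝ)^n * 1 := by
        apply mul_le_mul_of_nonneg_left (nid_le_one _) (by positivity)
    _ = |w n| / (r:ℝ)^n := mul_one _

set_option maxHeartbeats 2000000 in
lemma key (r : ℕ) (hr : 2 ≤ r) (w : ℕ → ℝ)
    (hw : Summable (fun n => |w n| / (r:ℝ)^n))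
    (m : ℕ) (hm : 1 ≤ m) (x : ℝ) (hx0 : 0 ≤ x) (hx1 : x ≤ 1) :
    ∃ u v a b : ℝ,
      0 ≤ u ∧ v ≤ 1 ∧ u ≤ a ∧ b ≤ v ∧ u ≤ x ∧ x ≤ v ∧ a ≤ x ∧ x ≤ b ∧
      v - u = 1 / (r:ℝ)^m ∧ b - a = 1 / (r:ℝ)^(m+1) ∧
      |((∑' n : ℕ, w n / (r:ℝ)^n * nearestIntDist ((r:ℝ)^n * b))
         - ∑' n : ℕ, w n / (r:ℝ)^n * nearestIntDist ((r:ℝ)^n * a)) / (b - a)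
        - ((∑' n : ℕ, w n / (r:ℝ)^n * nearestIntDist ((r:ℝ)^n * v))
         - ∑' n : ℕ, w n / (r:ℝ)^n * nearestIntDist ((r:ℝ)^n * u)) / (v - u)| = |w m| := by
  have hR2 : (2:ℝ) ≤ (r:ℝ) := by exact_mod_cast hr
  have hR0 : (0:ℝ) < (r:ℝ) := by linarith
  have hRm0 : (0:ℝ) < (r:ℝ)^m := by positivity
  have hrZ : (2:ℤ) ≤ (r:ℤ) := by exact_mod_cast hr
  set R : ℝ := (r:ℝ) with hRdef
  set Nn : ℤ := 2 * (r:ℤ)^m with hNndef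
  have hNn4 : 4 ≤ Nn := by
    have : (r:ℤ) ≤ (r:ℤ)^m := le_self_pow₀ (by omega) (by omega)
    have : (2:ℤ) ≤ (r:ℤ)^m := le_trans hrZ this
    omega
  have hNncast : ((Nn:ℤ):ℝ) = 2 * R^m := by rw [hNndef]; push_cast; ring
  have hNp0 : (0:ℝ) < 2 * R^m := by positivity
  have hrdvd1 : ¬ ((r:ℤ) ∣ 1) := by
    intro h
    have := Int.le_of_dvd one_pos h
    omega
  -- choose the integer c
  obtain ⟨c, hc1, hcN, hcr, hcx1, hcx2⟩ :
      ∃ c : ℤ, 1 ≤ c ∧ c ≤ Nn - 1 ∧ ¬ ((r:ℤ) ∣ c) ∧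
        ((c:ℝ) - 1) ≤ (Nn:ℝ) * x ∧ (Nn:ℝ) * x ≤ (c:ℝ) + 1 := by
    set j : ℤ := ⌊(Nn:ℝ) * x⌋ with hjdef
    have hNnR0 : (0:ℝ) ≤ (Nn:ℝ) := by rw [hNncast]; positivity
    have hjle : (j:ℝ) ≤ (Nn:ℝ) * x := Int.floor_le _
    have hjlt : (Nn:ℝ) * x < j + 1 := Int.lt_floor_add_one _
    have hj0 : 0 ≤ j := Int.floor_nonneg.2 (mul_nonneg hNnR0 hx0)
    have hjN : j ≤ Nn := by
      have h1 : (Nn:ℝ) * x ≤ (Nn:ℝ) := by nlinarith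
      have := Int.floor_le_floor h1
      rwa [Int.floor_intCast] at this
    have hrmdvd : (r:ℤ) ∣ Nn := by
      rw [hNndef]
      exact Dvd.dvd.mul_left (dvd_pow_self _ (by omega)) 2
    by_cases h1 : j ≤ 0
    · have hj : j = 0 := le_antisymm h1 hj0
      refine ⟨1, le_refl _, by omega, by simpa using hrdvd1, by push_cast; linarith [mul_nonneg hNnR0 hx0], ?_⟩
      have : ((j:ℝ)) = 0 := by exact_mod_cast hj
      push_cast
      linarith
    · by_cases h2 : Nn - 1 ≤ j
      · refine ⟨Nn - 1, by omega, le_refl _, ?_, ?_, ?_⟩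
        · intro h
          have : (r:ℤ) ∣ 1 := by
            have := Int.dvd_sub hrmdvd h
            simpa using this
          exact hrdvd1 this
        · have : ((Nn:ℝ) - 1) ≤ (j:ℝ) := by exact_mod_cast h2
          push_cast
          linarith
        · have : (Nn:ℝ) * x ≤ (Nn:ℝ) := by nlinarith
          push_cast
          linarith
      · have hj1 : 1 ≤ j := by omega
        have hjN2 : j ≤ Nn - 2 := by omega
        by_cases h3 : (r:ℤ) ∣ j
        · refine ⟨j + 1, by omega, by omega, ?_, ?_, ?_⟩
          · intro h
            have : (r:ℤ) ∣ 1 := by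
              have := Int.dvd_sub h h3
              simpa using this
            exact hrdvd1 this
          · push_cast; linarith
          · push_cast; linarith
        · exact ⟨j, by omega, by omega, h3, by push_cast; linarith, by push_cast; linarith⟩
  -- real points
  set u : ℝ := ((c:ℝ) - 1) / (2 * R^m) with hudef
  set v : ℝ := ((c:ℝ) + 1) / (2 * R^m) with hvdef
  have hcx1' : (c:ℝ) - 1 ≤ (2 * R^m) * x := by rw [← hNncast]; exact hcx1
  have hcx2' : (2 * R^m) * x ≤ (c:ℝ) + 1 := by rw [← hNncast]; exact hcx2
  have hux : u ≤ x := by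
    rw [hudef, div_le_iff₀ hNp0]
    linarith [hcx1']
  have hxv : x ≤ v := by
    rw [hvdef, le_div_iff₀ hNp0]
    linarith [hcx2']
  have hc1R : (1:ℝ) ≤ (c:ℝ) := by exact_mod_cast hc1
  have hcNR : (c:ℝ) + 1 ≤ 2 * R^m := by
    have : (c:ℝ) ≤ (Nn:ℝ) - 1 := by
      have : ((c:ℤ):ℝ) ≤ ((Nn - 1 : ℤ):ℝ) := by exact_mod_cast hcN
      push_cast at this
      linarith
    rw [hNncast] at this
    linarith
  have hu0 : 0 ≤ u := by
    rw [hudef]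
    apply div_nonneg (by linarith) (by positivity)
  have hv1 : v ≤ 1 := by
    rw [hvdef, div_le_one hNp0]
    linarith
  have hvu : v - u = 1 / R^m := by
    rw [hudef, hvdef]
    field_simp
    ring
  have huv : u ≤ v := by
    have := one_div_pos.mpr hRm0
    linarith [hvu]
  -- the half-interval containing x, with its level-m cell
  obtain ⟨lo, pm, hulo, hlox, hxhi, hhiv, hpm1, hpm2⟩ :
      ∃ (lo : ℝ) (pm : ℤ), u ≤ lo ∧ lo ≤ x ∧ x ≤ lo + 1/(2*R^m) ∧
        lo + 1/(2*R^m) ≤ v ∧ ((pm:ℝ)/2 ≤ R^m * lo) ∧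
        (R^m * (lo + 1/(2*R^m)) ≤ ((pm:ℝ)+1)/2) := by
    rcases le_or_gt x ((c:ℝ)/(2*R^m)) with hxm | hxm
    · have hmid : u + 1/(2*R^m) = (c:ℝ)/(2*R^m) := by
        rw [hudef, ← add_div]; norm_num
      have e3 : R^m * u = ((c:ℝ)-1)/2 := by rw [hudef]; field_simp
      have e4 : R^m * (u + 1/(2*R^m)) = (c:ℝ)/2 := by rw [hudef]; field_simp; ring
      refine ⟨u, c - 1, le_refl _, hux, ?_, ?_, ?_, ?_⟩
      · rw [hmid]; exact hxm
      · rw [hmid, hvdef, div_le_div_iff₀ hNp0 hNp0]; nlinarith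
      · rw [e3]; push_cast; linarith
      · rw [e4]; push_cast; linarith
    · have hmid : (c:ℝ)/(2*R^m) + 1/(2*R^m) = v := by
        rw [hvdef, ← add_div]
      have humid : u ≤ (c:ℝ)/(2*R^m) := by
        rw [hudef, div_le_div_iff₀ hNp0 hNp0]; nlinarith
      have e3 : R^m * ((c:ℝ)/(2*R^m)) = (c:ℝ)/2 := by field_simp
      have e4 : R^m * ((c:ℝ)/(2*R^m) + 1/(2*R^m)) = ((c:ℝ)+1)/2 := by
        field_simp
      refine ⟨(c:ℝ)/(2*R^m), c, humid, hxm.le, ?_, ?_, ?_, ?_⟩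
      · rw [hmid]; exact hxv
      · rw [hmid]
      · rw [e3]
      · rw [e4]
  -- the small interval [a,b]
  set Hh : ℝ := 1/R^(m+1) with hHhdef
  have hHh0 : 0 < Hh := by rw [hHhdef]; positivity
  have hHhNp : Hh ≤ 1/(2*R^m) := by
    rw [hHhdef]
    apply one_div_le_one_div_of_le hNp0
    rw [pow_succ]
    nlinarith [hRm0, hR2]
  set a : ℝ := min x (lo + 1/(2*R^m) - Hh) with hadef
  set b : ℝ := a + Hh with hbdef
  have hloa : lo ≤ a := le_min hlox (by linarith)
  have hax : a ≤ x := min_le_left _ _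
  have hbhi : b ≤ lo + 1/(2*R^m) := by
    have : a ≤ lo + 1/(2*R^m) - Hh := min_le_right _ _
    rw [hbdef]; linarith
  have hxb : x ≤ b := by
    rcases min_cases x (lo + 1/(2*R^m) - Hh) with ⟨h, _⟩ | ⟨h, h'⟩
    · rw [hbdef, hadef, h]; linarith
    · rw [hbdef, hadef, h]; linarith
  have hua : u ≤ a := le_trans hulo hloa
  have hbv : b ≤ v := le_trans hbhi hhiv
  have hba : b - a = 1/R^(m+1) := by rw [hbdef, hHhdef]; ring
  have hab : a ≤ b := by
    have := hHh0
    rw [hbdef]; linarith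
  -- cells for levels n < m
  have hcell : ∀ n, n < m → ∃ p : ℤ, ((p:ℝ)/2 ≤ R^n * u ∧ R^n * v ≤ ((p:ℝ)+1)/2) := by
    intro n hn
    set q : ℤ := (r:ℤ)^(m-n) with hqdef
    have hq2 : (2:ℤ) ≤ q := le_trans hrZ (le_self_pow₀ (by omega) (by omega))
    have hq0 : (0:ℤ) < q := by omega
    have hqc : ¬ q ∣ c := by
      intro h
      exact hcr (dvd_trans (dvd_pow_self (r:ℤ) (by omega : m - n ≠ 0)) h)
    have hmod := Int.emod_add_mul_ediv c q
    have h0 : 0 ≤ c % q := Int.emod_nonneg c (by omega)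
    have hltq : c % q < q := Int.emod_lt_of_pos c hq0
    have hne : c % q ≠ 0 := fun h => hqc (Int.dvd_of_emod_eq_zero h)
    have hge1 : 1 ≤ c % q := lt_of_le_of_ne h0 (Ne.symm hne)
    set p : ℤ := c / q with hpdef
    have hp' : q * p = q * (c / q) := by rw [hpdef]
    have h1 : q * p ≤ c - 1 := by rw [hp']; linarith
    have h2 : c + 1 ≤ q * (p + 1) := by
      have hqp : q * (p + 1) = q * (c / q) + q := by rw [hpdef]; ring
      linarith [hqp]
    have hqR : (q:ℝ) = R^(m-n) := by rw [hqdef]; push_cast; rfl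
    have hqR0 : (0:ℝ) < (q:ℝ) := by exact_mod_cast hq0
    have hRsplit : R^m = R^n * R^(m-n) := by rw [← pow_add]; congr 1; omega
    have hRn0' : (R:ℝ)^n ≠ 0 := by positivity
    have hRmn0' : (R:ℝ)^(m-n) ≠ 0 := by positivity
    have heu : R^n * u = ((c:ℝ)-1)/(2*(q:ℝ)) := by
      rw [hudef, hqR, hRsplit]; field_simp
    have hev : R^n * v = ((c:ℝ)+1)/(2*(q:ℝ)) := by
      rw [hvdef, hqR, hRsplit]; field_simp
    refine ⟨p, ?_, ?_⟩
    · rw [heu, div_le_div_iff₀ two_pos (by positivity)]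
      have h1R : (q:ℝ)*(p:ℝ) ≤ (c:ℝ)-1 := by exact_mod_cast h1
      nlinarith
    · rw [hev, div_le_div_iff₀ (by positivity) two_pos]
      have h2R : (c:ℝ)+1 ≤ (q:ℝ)*((p:ℝ)+1) := by exact_mod_cast h2
      nlinarith
  have hcell' : ∀ n : ℕ, ∃ p : ℤ, n < m → ((p:ℝ)/2 ≤ R^n * u ∧ R^n * v ≤ ((p:ℝ)+1)/2) := by
    intro n
    by_cases hn : n < m
    · obtain ⟨p, hp⟩ := hcell n hn
      exact ⟨p, fun _ => hp⟩
    · exact ⟨0, fun h => absurd h hn⟩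
  choose p hp using hcell'
  set E : ℝ := ∑ n ∈ Finset.range m, w n * slp (p n) with hEdef
  have hsum : ∀ y : ℝ, Summable (fun n => w n / R^n * nearestIntDist (R^n * y)) :=
    fun y => summable_term hr hw y
  have hRn0 : ∀ k : ℕ, (R:ℝ)^k ≠ 0 := fun k => by positivity
  have hshift : ∀ (k : ℕ) (y1 y2 : ℝ), y2 - y1 = 1/R^k → ∀ n, k ≤ n →
      w n / R^n * nearestIntDist (R^n * y2) - w n / R^n * nearestIntDist (R^n * y1) = 0 := by
    intro k y1 y2 hdiff n hkn
    have hKcast : (((r:ℤ)^(n-k) : ℤ) : ℝ) = R^(n-k) := by push_cast; rfl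
    have hsplit : R^n = R^(n-k) * R^k := by rw [← pow_add]; congr 1; omega
    have hmul : R^n * (y2 - y1) = R^(n-k) := by
      rw [hdiff, hsplit]; field_simp
    have hring : R^n * (y2 - y1) = R^n * y2 - R^n * y1 := by ring
    have heq : R^n * y2 = R^n * y1 + (((r:ℤ)^(n-k) : ℤ) : ℝ) := by
      rw [hKcast]; linarith
    rw [heq, nid_add_int]
    ring
  have hfvu : (∑' n : ℕ, w n / R^n * nearestIntDist (R^n * v))
      - (∑' n : ℕ, w n / R^n * nearestIntDist (R^n * u)) = (1/R^m) * E := by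
    rw [← Summable.tsum_sub (hsum v) (hsum u)]
    rw [tsum_eq_sum (s := Finset.range m)
      (fun n hn => hshift m u v hvu n (le_of_not_gt (fun h => hn (Finset.mem_range.2 h))))]
    rw [hEdef, Finset.mul_sum]
    apply Finset.sum_congr rfl
    intro n hn
    have hn' : n < m := Finset.mem_range.1 hn
    obtain ⟨hp1, hp2⟩ := hp n hn'
    have hmono1 : R^n * u ≤ R^n * v := mul_le_mul_of_nonneg_left huv (by positivity)
    have hcells := nid_cell hp1 (le_trans hmono1 hp2) (le_trans hp1 hmono1) hp2
    have he : R^n * v - R^n * u = R^n * (1/R^m) := by rw [← hvu]; ring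
    calc w n / R^n * nearestIntDist (R^n * v) - w n / R^n * nearestIntDist (R^n * u)
        = w n / R^n * (nearestIntDist (R^n * v) - nearestIntDist (R^n * u)) := by ring
      _ = w n / R^n * (slp (p n) * (R^n * v - R^n * u)) := by rw [hcells]
      _ = w n / R^n * (slp (p n) * (R^n * (1/R^m))) := by rw [he]
      _ = 1/R^m * (w n * slp (p n)) := by
          field_simp
  have hfba : (∑' n : ℕ, w n / R^n * nearestIntDist (R^n * b))
      - (∑' n : ℕ, w n / R^n * nearestIntDist (R^n * a))
      = (1/R^(m+1)) * (E + w m * slp pm) := by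
    rw [← Summable.tsum_sub (hsum b) (hsum a)]
    rw [tsum_eq_sum (s := Finset.range (m+1))
      (fun n hn => hshift (m+1) a b hba n (le_of_not_gt (fun h => hn (Finset.mem_range.2 h))))]
    rw [Finset.sum_range_succ]
    have hpart1 : ∀ n ∈ Finset.range m,
        w n / R^n * nearestIntDist (R^n * b) - w n / R^n * nearestIntDist (R^n * a)
        = 1/R^(m+1) * (w n * slp (p n)) := by
      intro n hn
      have hn' : n < m := Finset.mem_range.1 hn
      obtain ⟨hp1, hp2⟩ := hp n hn'
      have hRnpos : (0:ℝ) ≤ R^n := by positivity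
      have hA1 : ((p n : ℤ):ℝ)/2 ≤ R^n * a := le_trans hp1 (mul_le_mul_of_nonneg_left hua hRnpos)
      have hB2 : R^n * b ≤ (((p n : ℤ):ℝ)+1)/2 := le_trans (mul_le_mul_of_nonneg_left hbv hRnpos) hp2
      have hAB : R^n * a ≤ R^n * b := mul_le_mul_of_nonneg_left hab hRnpos
      have hcells := nid_cell hA1 (le_trans hAB hB2) (le_trans hA1 hAB) hB2
      have he : R^n * b - R^n * a = R^n * (1/R^(m+1)) := by rw [← hba]; ring
      calc w n / R^n * nearestIntDist (R^n * b) - w n / R^n * nearestIntDist (R^n * a)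
          = w n / R^n * (nearestIntDist (R^n * b) - nearestIntDist (R^n * a)) := by ring
        _ = w n / R^n * (slp (p n) * (R^n * b - R^n * a)) := by rw [hcells]
        _ = w n / R^n * (slp (p n) * (R^n * (1/R^(m+1)))) := by rw [he]
        _ = 1/R^(m+1) * (w n * slp (p n)) := by
            field_simp
    have hpartm :
        w m / R^m * nearestIntDist (R^m * b) - w m / R^m * nearestIntDist (R^m * a)
        = 1/R^(m+1) * (w m * slp pm) := by
      have hRmpos : (0:ℝ) ≤ R^m := by positivity
      have hA1 : ((pm:ℤ):ℝ)/2 ≤ R^m * a := le_trans hpm1 (mul_le_mul_of_nonneg_left hloa hRmpos)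
      have hB2 : R^m * b ≤ (((pm:ℤ):ℝ)+1)/2 :=
        le_trans (mul_le_mul_of_nonneg_left hbhi hRmpos) hpm2
      have hAB : R^m * a ≤ R^m * b := mul_le_mul_of_nonneg_left hab hRmpos
      have hcells := nid_cell hA1 (le_trans hAB hB2) (le_trans hA1 hAB) hB2
      have he : R^m * b - R^m * a = R^m * (1/R^(m+1)) := by rw [← hba]; ring
      calc w m / R^m * nearestIntDist (R^m * b) - w m / R^m * nearestIntDist (R^m * a)
          = w m / R^m * (nearestIntDist (R^m * b) - nearestIntDist (R^m * a)) := by ring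
        _ = w m / R^m * (slp pm * (R^m * b - R^m * a)) := by rw [hcells]
        _ = w m / R^m * (slp pm * (R^m * (1/R^(m+1)))) := by rw [he]
        _ = 1/R^(m+1) * (w m * slp pm) := by
            field_simp
    rw [Finset.sum_congr rfl hpart1, hpartm, ← Finset.mul_sum, ← hEdef]
    ring
  refine ⟨u, v, a, b, hu0, hv1, hua, hbv, hux, hxv, hax, hxb, hvu, hba, ?_⟩
  rw [hfvu, hfba, hvu, hba]
  have h1 : (1:ℝ)/R^(m+1) ≠ 0 := by positivity
  have h2 : (1:ℝ)/R^m ≠ 0 := by positivity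
  rw [mul_div_cancel_left₀ _ h1, mul_div_cancel_left₀ _ h2, add_sub_cancel_left, abs_mul,
    abs_slp, mul_one]


end NDAux

open NDAux in
set_option maxHeartbeats 1000000 in
theorem stmt3 (r : ℕ) (hr : 2 ≤ r) (w : ℕ → ℝ)
    (hw : Summable (fun n => |w n| / (r : ℝ) ^ n))
    (hw0 : ¬ Tendsto w atTop (𝓝 0)) :
    ∀ x ∈ Set.Icc (0 : ℝ) 1,
      ¬ DifferentiableWithinAt ℝ
        (fun y => ∑' n : ℕ, w n / (r : ℝ) ^ n * nearestIntDist ((r : ℝ) ^ n * y))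
        (Set.Icc 0 1) x := by
  intro x hx hdiff
  obtain ⟨hx0, hx1⟩ := hx
  set f : ℝ → ℝ := fun y => ∑' n : ℕ, w n / (r : ℝ) ^ n * nearestIntDist ((r : ℝ) ^ n * y)
    with hfdef
  set L : ℝ := derivWithin f (Set.Icc 0 1) x with hLdef
  have hL : HasDerivWithinAt f L (Set.Icc 0 1) x := hdiff.hasDerivWithinAt
  rw [hasDerivWithinAt_iff_isLittleO] at hL
  have hR1 : (1:ℝ) < (r:ℝ) := by
    have : (2:ℝ) ≤ (r:ℝ) := by exact_mod_cast hr
    linarith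
  -- extract ε
  obtain ⟨ε, hε0, hfreq⟩ : ∃ ε > 0, ∀ N : ℕ, ∃ n ≥ N, ε ≤ |w n| := by
    by_contra hcon
    push_neg at hcon
    apply hw0
    rw [Metric.tendsto_atTop]
    intro δ hδ
    obtain ⟨N, hN⟩ := hcon δ hδ
    refine ⟨N, fun n hn => ?_⟩
    rw [Real.dist_eq, sub_zero]
    exact hN n hn
  have h5 : 0 < ε/5 := by linarith
  have hev := hL.def h5
  rw [eventually_nhdsWithin_iff, Metric.eventually_nhds_iff] at hev
  obtain ⟨δ, hδ0, hδ⟩ := hev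
  -- choose a scale m
  obtain ⟨M, hM⟩ : ∃ M : ℕ, 1/δ < (r:ℝ)^M := pow_unbounded_of_one_lt _ hR1
  obtain ⟨m, hmM, hmw⟩ := hfreq (max M 1)
  have hm1 : 1 ≤ m := le_trans (le_max_right _ _) hmM
  have hRm : 1/δ < (r:ℝ)^m :=
    lt_of_lt_of_le hM (pow_le_pow_right₀ (le_of_lt hR1) (le_trans (le_max_left _ _) hmM))
  have hRm0 : (0:ℝ) < (r:ℝ)^m := by positivity
  have hδm : 1/(r:ℝ)^m < δ := by
    rw [div_lt_iff₀ hRm0]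
    rw [div_lt_iff₀ hδ0] at hRm
    nlinarith
  obtain ⟨u, v, a, b, hu0, hv1, hua, hbv, hux, hxv, hax, hxb, hvu, hba, habs⟩ :=
    key r hr w hw m hm1 x hx0 hx1
  have hvu0 : (0:ℝ) < v - u := by rw [hvu]; positivity
  have hba0 : (0:ℝ) < b - a := by rw [hba]; positivity
  have hbam : b - a ≤ 1/(r:ℝ)^m := by
    rw [hba]
    apply one_div_le_one_div_of_le hRm0
    rw [pow_succ]
    nlinarith
  -- generic chord estimate
  have hchord : ∀ y1 y2 : ℝ, u ≤ y1 → y1 ≤ x → x ≤ y2 → y2 ≤ v → 0 < y2 - y1 →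
      |(f y2 - f y1)/(y2 - y1) - L| ≤ 2*(ε/5) := by
    intro y1 y2 h1 h2 h3 h4 h5'
    have hy1mem : y1 ∈ Set.Icc (0:ℝ) 1 := ⟨le_trans hu0 h1, le_trans (le_trans h2 h3) (le_trans h4 hv1)⟩
    have hy2mem : y2 ∈ Set.Icc (0:ℝ) 1 := ⟨le_trans hu0 (le_trans h1 (le_trans h2 h3)), le_trans h4 hv1⟩
    have hy1d : dist y1 x < δ := by
      rw [Real.dist_eq, abs_of_nonpos (by linarith)]
      have : x - y1 ≤ v - u := by linarith
      calc -(y1 - x) = x - y1 := by ring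
        _ ≤ v - u := this
        _ = 1/(r:ℝ)^m := hvu
        _ < δ := hδm
    have hy2d : dist y2 x < δ := by
      rw [Real.dist_eq, abs_of_nonneg (by linarith)]
      calc y2 - x ≤ v - u := by linarith
        _ = 1/(r:ℝ)^m := hvu
        _ < δ := hδm
    have e1 := hδ hy1d hy1mem
    have e2 := hδ hy2d hy2mem
    rw [Real.norm_eq_abs, Real.norm_eq_abs, smul_eq_mul] at e1 e2
    have hb1 : |y1 - x| ≤ y2 - y1 := by
      rw [abs_of_nonpos (by linarith)]; linarith
    have hb2 : |y2 - x| ≤ y2 - y1 := by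
      rw [abs_of_nonneg (by linarith)]; linarith
    have hnum : |f y2 - f y1 - (y2 - y1) * L| ≤ (ε/5) * (2*(y2 - y1)) := by
      have hsplit : f y2 - f y1 - (y2 - y1) * L
          = (f y2 - f x - (y2 - x) * L) - (f y1 - f x - (y1 - x) * L) := by ring
      rw [hsplit]
      calc |(f y2 - f x - (y2 - x) * L) - (f y1 - f x - (y1 - x) * L)|
          ≤ |f y2 - f x - (y2 - x) * L| + |f y1 - f x - (y1 - x) * L| := abs_sub _ _
        _ ≤ ε/5 * |y2 - x| + ε/5 * |y1 - x| := add_le_add e2 e1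
        _ ≤ ε/5 * (y2 - y1) + ε/5 * (y2 - y1) := by
            apply add_le_add <;> apply mul_le_mul_of_nonneg_left (by assumption) (le_of_lt h5)
        _ = ε/5 * (2*(y2 - y1)) := by ring
    have hne : y2 - y1 ≠ 0 := ne_of_gt h5'
    have hrw : (f y2 - f y1)/(y2 - y1) - L = (f y2 - f y1 - (y2 - y1) * L)/(y2 - y1) := by
      field_simp
    rw [hrw, abs_div, abs_of_pos h5', div_le_iff₀ h5']
    linarith [hnum]
  have q1 := hchord u v (le_refl u) hux hxv (le_refl v) hvu0
  have q2 := hchord a b hua hax hxb hbv hba0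
  have habs' : |(f b - f a)/(b - a) - (f v - f u)/(v - u)| = |w m| := habs
  have hfinal : |w m| ≤ 4*(ε/5) := by
    rw [← habs']
    calc |(f b - f a)/(b - a) - (f v - f u)/(v - u)|
        = |((f b - f a)/(b - a) - L) - ((f v - f u)/(v - u) - L)| := by ring_nf
      _ ≤ |(f b - f a)/(b - a) - L| + |(f v - f u)/(v - u) - L| := abs_sub _ _
      _ ≤ 2*(ε/5) + 2*(ε/5) := add_le_add q2 q1
      _ = 4*(ε/5) := by ring
  linarith [hmw, hε0, hfinal]
end

section
/- Let r ≥ 2 be an integer. The Takagi–Van der Waerden function f_r(x) = ∑ₙ r⁻ⁿ φ(rⁿ x) is nowhere differentiable on [0,1]. -/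
open Filter Topology

lemma nid_even (q : ℤ) (t : ℝ) (h1 : (q:ℝ) ≤ t) (h2 : t ≤ q + 1/2) :
    nearestIntDist t = t - q := by
  rcases eq_or_lt_of_le h2 with h | h
  · have : round t = q + 1 := by
      rw [round_eq, h]; rw [show (q:ℝ) + 1/2 + 1/2 = ((q+1 : ℤ) : ℝ) by push_cast; ring,
        Int.floor_intCast]
    rw [nearestIntDist, this, h]; push_cast; rw [abs_of_nonpos] <;> ring_nf <;> norm_num
  · have : round t = q := by
      rw [round_eq, Int.floor_eq_iff]
      constructor <;> push_cast <;> linarith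
    rw [nearestIntDist, this, abs_of_nonneg (by linarith)]

lemma nid_odd (q : ℤ) (t : ℝ) (h1 : (q:ℝ) + 1/2 ≤ t) (h2 : t ≤ q + 1) :
    nearestIntDist t = q + 1 - t := by
  have : round t = q + 1 := by
    rw [round_eq, Int.floor_eq_iff]
    constructor <;> push_cast <;> linarith
  rw [nearestIntDist, this, abs_of_nonpos (by push_cast; linarith)]
  push_cast; ring

lemma nid_diff (k : ℤ) (a b : ℝ) (hk : (k:ℝ)/2 ≤ a) (hab : a ≤ b) (hb : b ≤ ((k:ℝ)+1)/2) :
    nearestIntDist b - nearestIntDist a = (if Even k then b - a else a - b) := by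
  rcases Int.even_or_odd k with ⟨q, rfl⟩ | ⟨q, rfl⟩
  · rw [if_pos ⟨q, rfl⟩]
    rw [nid_even q a (by push_cast at hk ⊢; linarith) (by push_cast at hb ⊢; linarith),
        nid_even q b (by push_cast at hk ⊢; linarith) (by push_cast at hb ⊢; linarith)]
    ring
  · rw [if_neg (by simp [Int.even_add_one, parity_simps])]
    rw [nid_odd q a (by push_cast at hk ⊢; linarith) (by push_cast at hb ⊢; linarith),
        nid_odd q b (by push_cast at hk ⊢; linarith) (by push_cast at hb ⊢; linarith)]
    ring

lemma nid_half (k : ℤ) : nearestIntDist ((k:ℝ)/2) = if Even k then 0 else 1/2 := by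
  rcases Int.even_or_odd k with ⟨q, rfl⟩ | ⟨q, rfl⟩
  · rw [if_pos ⟨q, rfl⟩, nid_even q _ (by push_cast; linarith) (by push_cast; linarith)]
    push_cast; ring
  · rw [if_neg (by simp [Int.even_add_one, parity_simps]),
      nid_odd q _ (by push_cast; linarith) (by push_cast; linarith)]
    push_cast; ring

lemma nid_nonneg (t : ℝ) : 0 ≤ nearestIntDist t := abs_nonneg _
lemma nid_le_half (t : ℝ) : nearestIntDist t ≤ 1/2 := abs_sub_round t

noncomputable def tj (r : ℕ) (x : ℝ) (m : ℕ) : ℤ :=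
  min ⌊2 * (r:ℝ)^m * x⌋ ((2 * (r^m : ℕ) : ℤ) - 1)

noncomputable def tu (r : ℕ) (x : ℝ) (m : ℕ) : ℝ := (tj r x m : ℝ) / (2 * (r:ℝ)^m)
noncomputable def tv (r : ℕ) (x : ℝ) (m : ℕ) : ℝ := ((tj r x m : ℝ) + 1) / (2 * (r:ℝ)^m)

section
variable {r : ℕ} {x : ℝ}

lemma two_rpow_pos (hr : 2 ≤ r) (m : ℕ) : (0:ℝ) < 2 * (r:ℝ)^m := by
  have h : (0:ℝ) < (r:ℝ) := by exact_mod_cast Nat.lt_of_lt_of_le (by norm_num) hr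
  positivity

lemma rpow_pos_nat (hr : 2 ≤ r) (m : ℕ) : (0:ℤ) < (r^m : ℕ) := by positivity

lemma tj_nonneg (hr : 2 ≤ r) (hx : 0 ≤ x) (m : ℕ) : 0 ≤ tj r x m := by
  apply le_min
  · apply Int.floor_nonneg.mpr
    have := two_rpow_pos hr m
    positivity
  · have := rpow_pos_nat hr m; omega

lemma tj_le (m : ℕ) : tj r x m ≤ (2 * (r^m : ℕ) : ℤ) - 1 := min_le_right _ _

lemma tu_le (hr : 2 ≤ r) (m : ℕ) : tu r x m ≤ x := by
  rw [tu, div_le_iff₀ (two_rpow_pos hr m)]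
  have h0 : tj r x m ≤ ⌊2 * (r:ℝ)^m * x⌋ := min_le_left _ _
  calc (tj r x m : ℝ) ≤ (⌊2 * (r:ℝ)^m * x⌋ : ℝ) := by exact_mod_cast h0
    _ ≤ 2 * (r:ℝ)^m * x := Int.floor_le _
    _ = x * (2 * (r:ℝ)^m) := by ring

lemma le_tv (hx : x ∈ Set.Icc (0:ℝ) 1) (hr : 2 ≤ r) (m : ℕ) : x ≤ tv r x m := by
  rw [tv, le_div_iff₀ (two_rpow_pos hr m)]
  rcases min_cases ⌊2 * (r:ℝ)^m * x⌋ ((2 * (r^m : ℕ) : ℤ) - 1) with ⟨h, _⟩ | ⟨h, _⟩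
  · rw [tj, h]
    have := Int.lt_floor_add_one (2 * (r:ℝ)^m * x)
    nlinarith [this]
  · rw [tj, h]
    have h1 : x * (2 * (r:ℝ)^m) ≤ 2 * (r:ℝ)^m := by
      nlinarith [hx.2, two_rpow_pos hr m]
    push_cast
    nlinarith [h1]

lemma tu_nonneg (hr : 2 ≤ r) (hx : 0 ≤ x) (m : ℕ) : 0 ≤ tu r x m :=
  div_nonneg (by exact_mod_cast tj_nonneg hr hx m) (le_of_lt (two_rpow_pos hr m))

lemma tv_le_one (hr : 2 ≤ r) (m : ℕ) : tv r x m ≤ 1 := by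
  rw [tv, div_le_one (two_rpow_pos hr m)]
  have h0 := tj_le (r := r) (x := x) m
  have : (tj r x m : ℝ) ≤ 2 * (r:ℝ)^m - 1 := by exact_mod_cast h0
  linarith

lemma tv_sub_tu (m : ℕ) : tv r x m - tu r x m = 1 / (2 * (r:ℝ)^m) := by
  rw [tv, tu, div_sub_div_same]; ring_nf

lemma tj_eq_of_lt (hr : 2 ≤ r) (hx0 : 0 ≤ x) (hx1 : x < 1) (m : ℕ) :
    tj r x m = ⌊2 * (r:ℝ)^m * x⌋ := by
  apply min_eq_left
  have h : 2 * (r:ℝ)^m * x < 2 * (r:ℝ)^m := by nlinarith [two_rpow_pos hr m]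
  have := Int.floor_lt.mpr (by push_cast; linarith : 2 * (r:ℝ)^m * x < ((2 * (r^m : ℕ) : ℤ) : ℝ))
  omega

lemma tj_one (m : ℕ) : tj r 1 m = (2 * (r^m : ℕ) : ℤ) - 1 := by
  apply min_eq_right
  have : (2 * (r:ℝ)^m * 1) = ((2 * (r^m : ℕ) : ℤ) : ℝ) := by push_cast; ring
  rw [this, Int.floor_intCast]; omega

lemma tj_nest (hr : 2 ≤ r) (hx : x ∈ Set.Icc (0:ℝ) 1) (m : ℕ) :
    (r : ℤ) * tj r x m ≤ tj r x (m+1) ∧ tj r x (m+1) + 1 ≤ (r : ℤ) * (tj r x m + 1) := by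
  have hr1 : (1:ℤ) ≤ (r:ℤ) := by exact_mod_cast Nat.one_le_of_lt hr
  rcases eq_or_lt_of_le hx.2 with h1 | h1
  · subst h1
    rw [tj_one, tj_one]
    push_cast [pow_succ]
    constructor <;> nlinarith [rpow_pos_nat hr m, pow_pos (lt_of_lt_of_le one_pos hr1) m]
  · rw [tj_eq_of_lt hr hx.1 h1, tj_eq_of_lt hr hx.1 h1]
    have hrp : (0:ℝ) < (r:ℝ) := by exact_mod_cast Nat.lt_of_lt_of_le (by norm_num) hr
    constructor
    · apply Int.le_floor.mpr
      push_cast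
      calc ((r:ℝ)) * (⌊2 * (r:ℝ)^m * x⌋ : ℝ) ≤ (r:ℝ) * (2 * (r:ℝ)^m * x) :=
            mul_le_mul_of_nonneg_left (Int.floor_le _) (le_of_lt hrp)
        _ = 2 * (r:ℝ)^(m+1) * x := by ring
    · have hlt : 2 * (r:ℝ)^(m+1) * x < (r:ℝ) * ((⌊2 * (r:ℝ)^m * x⌋ : ℝ) + 1) := by
        have h2 := Int.lt_floor_add_one (2 * (r:ℝ)^m * x)
        have he : 2 * (r:ℝ)^(m+1) * x = (r:ℝ) * (2 * (r:ℝ)^m * x) := by ring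
        rw [he]
        exact mul_lt_mul_of_pos_left h2 hrp
      have : ⌊2 * (r:ℝ)^(m+1) * x⌋ < (r:ℤ) * (⌊2 * (r:ℝ)^m * x⌋ + 1) :=
        Int.floor_lt.mpr (by push_cast; exact hlt)
      omega

lemma tuv_nest (hr : 2 ≤ r) (hx : x ∈ Set.Icc (0:ℝ) 1) (m : ℕ) :
    tu r x m ≤ tu r x (m+1) ∧ tv r x (m+1) ≤ tv r x m := by
  obtain ⟨h1, h2⟩ := tj_nest hr hx m
  have hp := two_rpow_pos hr m
  have hrp : (0:ℝ) < (r:ℝ) := by exact_mod_cast Nat.lt_of_lt_of_le (by norm_num) hr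
  have hpow : (2 * (r:ℝ)^(m+1)) = (2 * (r:ℝ)^m) * r := by ring
  have hp' : (0:ℝ) < 2 * ((r:ℝ)^m * (r:ℝ)) := by positivity
  constructor
  · rw [tu, tu, pow_succ, div_le_div_iff₀ hp hp']
    have h1' : (r:ℝ) * (tj r x m : ℝ) ≤ (tj r x (m+1) : ℝ) := by exact_mod_cast h1
    nlinarith [mul_le_mul_of_nonneg_right h1' (le_of_lt hp)]
  · rw [tv, tv, pow_succ, div_le_div_iff₀ hp' hp]
    have h2' : (tj r x (m+1) : ℝ) + 1 ≤ (r:ℝ) * ((tj r x m : ℝ) + 1) := by exact_mod_cast h2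
    nlinarith [mul_le_mul_of_nonneg_right h2' (le_of_lt hp)]

lemma g_summable (hr : 2 ≤ r) (y : ℝ) :
    Summable (fun n : ℕ => nearestIntDist ((r:ℝ)^n * y) / (r:ℝ)^n) := by
  have hrp : (0:ℝ) < (r:ℝ) := by exact_mod_cast Nat.lt_of_lt_of_le (by norm_num) hr
  have hr1 : (1:ℝ) < (r:ℝ) := by exact_mod_cast Nat.lt_of_lt_of_le (by norm_num) hr
  have hs : Summable (fun n : ℕ => (1/2) * (1/(r:ℝ))^n) := by
    apply Summable.mul_left
    apply summable_geometric_of_lt_one (by positivity)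
    rw [div_lt_one hrp]; linarith
  refine Summable.of_nonneg_of_le (fun n => ?_) (fun n => ?_) hs
  · have h1 : (0:ℝ) < (r:ℝ)^n := by positivity
    exact div_nonneg (nid_nonneg _) (le_of_lt h1)
  · have h1 : (0:ℝ) < (r:ℝ)^n := by positivity
    calc nearestIntDist ((r:ℝ)^n * y) / (r:ℝ)^n ≤ (1/2) / (r:ℝ)^n := by
          gcongr; exact nid_le_half _
      _ = (1/2) * (1/(r:ℝ))^n := by rw [one_div ((r:ℝ)), inv_pow]; ring

lemma slope_eq (hr : 2 ≤ r) {n m : ℕ} (hnm : n < m) {a b : ℝ}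
    (ha : tu r x m ≤ a) (hab : a ≤ b) (hb : b ≤ tv r x m) :
    nearestIntDist ((r:ℝ)^n * b) - nearestIntDist ((r:ℝ)^n * a)
      = (if Even (tj r x m / ((r^(m-n) : ℕ) : ℤ)) then b - a else a - b) * (r:ℝ)^n := by
  have hrp : (0:ℝ) < (r:ℝ) := by exact_mod_cast Nat.lt_of_lt_of_le (by norm_num) hr
  set N : ℤ := ((r^(m-n) : ℕ) : ℤ) with hN
  have hNpos : 0 < N := rpow_pos_nat hr (m-n)
  set k : ℤ := tj r x m / N with hk
  have key1 : k * N ≤ tj r x m := Int.ediv_mul_le _ (ne_of_gt hNpos)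
  have key2 : tj r x m + 1 ≤ (k + 1) * N := Int.lt_ediv_add_one_mul_self _ hNpos
  have hpow : (r:ℝ)^m = (r:ℝ)^n * (r:ℝ)^(m-n) := by
    rw [← pow_add]; congr 1; omega
  have hNR : (N:ℝ) = (r:ℝ)^(m-n) := by rw [hN]; push_cast; ring
  have hNRpos : (0:ℝ) < (N:ℝ) := by exact_mod_cast hNpos
  have hua : ((k:ℝ))/2 ≤ (r:ℝ)^n * a := by
    have h1 : (r:ℝ)^n * tu r x m = (tj r x m : ℝ) / (2 * (r:ℝ)^(m-n)) := by
      rw [tu, hpow]; field_simp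
    have h2 : ((k:ℝ))/2 ≤ (tj r x m : ℝ) / (2 * (r:ℝ)^(m-n)) := by
      rw [div_le_div_iff₀ two_pos (by positivity)]
      have : (k:ℝ) * (N:ℝ) ≤ (tj r x m : ℝ) := by exact_mod_cast key1
      rw [← hNR] at *
      nlinarith
    have h3 : (r:ℝ)^n * tu r x m ≤ (r:ℝ)^n * a :=
      mul_le_mul_of_nonneg_left ha (by positivity)
    linarith [h1 ▸ h3]
  have hvb : (r:ℝ)^n * b ≤ ((k:ℝ) + 1)/2 := by
    have h1 : (r:ℝ)^n * tv r x m = ((tj r x m : ℝ) + 1) / (2 * (r:ℝ)^(m-n)) := by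
      rw [tv, hpow]; field_simp
    have h2 : ((tj r x m : ℝ) + 1) / (2 * (r:ℝ)^(m-n)) ≤ ((k:ℝ) + 1)/2 := by
      rw [div_le_div_iff₀ (by positivity) two_pos]
      have : (tj r x m : ℝ) + 1 ≤ ((k:ℝ) + 1) * (N:ℝ) := by exact_mod_cast key2
      rw [← hNR] at *
      nlinarith
    have h3 : (r:ℝ)^n * b ≤ (r:ℝ)^n * tv r x m :=
      mul_le_mul_of_nonneg_left hb (by positivity)
    linarith [h1 ▸ h3]
  have hab' : (r:ℝ)^n * a ≤ (r:ℝ)^n * b := mul_le_mul_of_nonneg_left hab (by positivity)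
  have := nid_diff k ((r:ℝ)^n * a) ((r:ℝ)^n * b) hua hab' hvb
  rw [this]
  split_ifs <;> ring

lemma nid_grid (hr : 2 ≤ r) {n m : ℕ} (hmn : m ≤ n) (c : ℤ) :
    nearestIntDist ((r:ℝ)^n * ((c:ℝ)/(2*(r:ℝ)^m)))
      = if Even (c * ((r^(n-m) : ℕ) : ℤ)) then 0 else 1/2 := by
  have hrp : (0:ℝ) < (r:ℝ) := by exact_mod_cast Nat.lt_of_lt_of_le (by norm_num) hr
  have hpow : (r:ℝ)^n = (r:ℝ)^m * (r:ℝ)^(n-m) := by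
    rw [← pow_add]; congr 1; omega
  have h1 : (r:ℝ)^n * ((c:ℝ)/(2*(r:ℝ)^m)) = ((c * ((r^(n-m) : ℕ) : ℤ) : ℤ) : ℝ)/2 := by
    push_cast
    rw [hpow]; field_simp
  rw [h1, nid_half]

noncomputable def tem (r : ℕ) (x : ℝ) (m : ℕ) : ℝ := if Even (tj r x m) then 1 else -1

noncomputable def tcr (r : ℕ) : ℝ := if Even r then 1 else (1 - 1/(r:ℝ))⁻¹


lemma one_div_r_lt_one (hr : 2 ≤ r) : 1/(r:ℝ) < 1 := by
  have hr1 : (2:ℝ) ≤ (r:ℝ) := by exact_mod_cast hr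
  rw [div_lt_one (by linarith)]; linarith

lemma tcr_ge_one (hr : 2 ≤ r) : 1 ≤ tcr r := by
  rw [tcr]
  split_ifs
  · exact le_refl 1
  · have h0 : 0 < 1 - 1/(r:ℝ) := by linarith [one_div_r_lt_one hr]
    have h1 : 1 - 1/(r:ℝ) ≤ 1 := by
      have hr1 : (2:ℝ) ≤ (r:ℝ) := by exact_mod_cast hr
      have : 0 < 1/(r:ℝ) := by positivity
      linarith
    have h2 := inv_mul_cancel₀ (ne_of_gt h0)
    nlinarith [inv_pos.mpr h0]

lemma tem_cases (m : ℕ) : tem r x m = 1 ∨ tem r x m = -1 := by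
  rw [tem]; split_ifs <;> simp

lemma tail_sum (hr : 2 ≤ r) (m : ℕ) :
    ∑' i : ℕ, (nearestIntDist ((r:ℝ)^(i+m) * tv r x m)/(r:ℝ)^(i+m)
      - nearestIntDist ((r:ℝ)^(i+m) * tu r x m)/(r:ℝ)^(i+m))
      = tem r x m * tcr r / (2*(r:ℝ)^m) := by
  have hrp : (0:ℝ) < (r:ℝ) := by exact_mod_cast Nat.lt_of_lt_of_le (by norm_num) hr
  have hterm : ∀ i : ℕ,
      nearestIntDist ((r:ℝ)^(i+m) * tv r x m)/(r:ℝ)^(i+m)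
        - nearestIntDist ((r:ℝ)^(i+m) * tu r x m)/(r:ℝ)^(i+m)
      = ((if Even ((tj r x m + 1) * ((r^i : ℕ) : ℤ)) then (0:ℝ) else 1/2)
         - (if Even (tj r x m * ((r^i : ℕ) : ℤ)) then (0:ℝ) else 1/2)) / (r:ℝ)^(i+m) := by
    intro i
    have h1 := nid_grid (r := r) hr (Nat.le_add_left m i) (tj r x m)
    have h2 := nid_grid (r := r) hr (Nat.le_add_left m i) (tj r x m + 1)
    rw [Nat.add_sub_cancel] at h1 h2
    rw [tu, tv, show ((tj r x m : ℝ) + 1) = (((tj r x m + 1 : ℤ)) : ℝ) by push_cast; ring,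
      h2, h1, div_sub_div_same]
  rcases Nat.even_or_odd r with hre | hro
  · have hcr : tcr r = 1 := if_pos hre
    rw [tsum_eq_single 0 ?side]
    case side =>
      intro i hi
      rw [hterm i]
      have hev : Even ((r^i : ℕ) : ℤ) := by
        exact_mod_cast Nat.even_pow.mpr ⟨hre, hi⟩
      rw [if_pos (Int.even_mul.mpr (Or.inr hev)), if_pos (Int.even_mul.mpr (Or.inr hev))]
      simp
    rw [hterm 0]
    simp only [pow_zero, Nat.cast_one, mul_one, zero_add]
    rw [hcr, tem]
    have hpm : (0:ℝ) < (r:ℝ)^m := by positivity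
    rcases Int.even_or_odd (tj r x m) with he | ho
    · rw [if_pos he, if_pos he, if_neg (Int.even_add_one.not.mpr (by simpa using he))]
      field_simp
      norm_num
    · have hne : ¬ Even (tj r x m) := Int.not_even_iff_odd.mpr ho
      rw [if_neg hne, if_neg hne, if_pos (Int.even_add_one.mpr hne)]
      field_simp
      norm_num
  · have hcr : tcr r = (1 - 1/(r:ℝ))⁻¹ := if_neg (Nat.not_even_iff_odd.mpr hro)
    have hodd : ∀ i : ℕ, ¬ Even ((r^i : ℕ) : ℤ) := by
      intro i
      apply Int.not_even_iff_odd.mpr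
      exact_mod_cast hro.pow
    have hterm2 : ∀ i : ℕ,
        nearestIntDist ((r:ℝ)^(i+m) * tv r x m)/(r:ℝ)^(i+m)
          - nearestIntDist ((r:ℝ)^(i+m) * tu r x m)/(r:ℝ)^(i+m)
        = (tem r x m / (2*(r:ℝ)^m)) * (1/(r:ℝ))^i := by
      intro i
      rw [hterm i, tem]
      have hpm : (0:ℝ) < (r:ℝ)^(i+m) := by positivity
      have hsplit : (r:ℝ)^(i+m) = (r:ℝ)^i * (r:ℝ)^m := pow_add _ i m
      rcases Int.even_or_odd (tj r x m) with he | ho2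
      · rw [if_pos he, if_pos (Int.even_mul.mpr (Or.inl he)),
          if_neg (fun hc => (hodd i) ((Int.even_mul.mp hc).resolve_left
            (Int.even_add_one.not.mpr (by simpa using he))))]
        rw [hsplit]
        field_simp
        ring
        rw [← mul_pow, mul_inv_cancel₀ (ne_of_gt hrp), one_pow]
      · have hne : ¬ Even (tj r x m) := Int.not_even_iff_odd.mpr ho2
        rw [if_neg hne, if_neg (fun hc => (hodd i) ((Int.even_mul.mp hc).resolve_left hne)),
          if_pos (Int.even_mul.mpr (Or.inl (Int.even_add_one.mpr hne)))]
        rw [hsplit]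
        field_simp
        ring
        rw [← mul_pow, mul_inv_cancel₀ (ne_of_gt hrp), one_pow]
    calc ∑' i : ℕ, (nearestIntDist ((r:ℝ)^(i+m) * tv r x m)/(r:ℝ)^(i+m)
          - nearestIntDist ((r:ℝ)^(i+m) * tu r x m)/(r:ℝ)^(i+m))
        = ∑' i : ℕ, (tem r x m / (2*(r:ℝ)^m)) * (1/(r:ℝ))^i := by
          exact tsum_congr hterm2
      _ = (tem r x m / (2*(r:ℝ)^m)) * (1 - 1/(r:ℝ))⁻¹ := by
          rw [tsum_mul_left, tsum_geometric_of_lt_one (by positivity) (one_div_r_lt_one hr)]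
      _ = tem r x m * tcr r / (2*(r:ℝ)^m) := by rw [hcr]; ring

end
noncomputable def tsl (r : ℕ) (x : ℝ) (n m : ℕ) : ℝ :=
  if Even (tj r x m / ((r^(m-n) : ℕ) : ℤ)) then 1 else -1

section
variable {r : ℕ} {x : ℝ}

lemma tsl_cases (n m : ℕ) : tsl r x n m = 1 ∨ tsl r x n m = -1 := by
  rw [tsl]; split_ifs <;> simp

lemma head_term (hr : 2 ≤ r) {n m : ℕ} (hnm : n < m) {a b : ℝ}
    (ha : tu r x m ≤ a) (hab : a ≤ b) (hb : b ≤ tv r x m) :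
    nearestIntDist ((r:ℝ)^n * b)/(r:ℝ)^n - nearestIntDist ((r:ℝ)^n * a)/(r:ℝ)^n
      = tsl r x n m * (b - a) := by
  have hrp : (0:ℝ) < (r:ℝ) := by exact_mod_cast Nat.lt_of_lt_of_le (by norm_num) hr
  have hp : (r:ℝ)^n ≠ 0 := by positivity
  rw [div_sub_div_same, slope_eq hr hnm ha hab hb, tsl]
  split_ifs <;> field_simp <;> ring

lemma F_diff (hr : 2 ≤ r) (m : ℕ) :
    (∑' n : ℕ, nearestIntDist ((r:ℝ)^n * tv r x m)/(r:ℝ)^n)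
      - (∑' n : ℕ, nearestIntDist ((r:ℝ)^n * tu r x m)/(r:ℝ)^n)
    = (∑ n ∈ Finset.range m,
        (nearestIntDist ((r:ℝ)^n * tv r x m)/(r:ℝ)^n
          - nearestIntDist ((r:ℝ)^n * tu r x m)/(r:ℝ)^n))
      + tem r x m * tcr r / (2*(r:ℝ)^m) := by
  rw [← Summable.tsum_sub (g_summable hr _) (g_summable hr _),
    ← Summable.sum_add_tsum_nat_add m ((g_summable hr _).sub (g_summable hr _)), tail_sum hr m]

lemma tu_le_tv (hr : 2 ≤ r) (m : ℕ) : tu r x m ≤ tv r x m := by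
  have h := tv_sub_tu (r := r) (x := x) m
  have h2 : (0:ℝ) < 1/(2*(r:ℝ)^m) := by
    have := two_rpow_pos hr m
    positivity
  linarith

set_option maxHeartbeats 1000000 in
lemma D_eq (hr : 2 ≤ r) (m : ℕ) :
    2*(r:ℝ)^m * ((∑' n : ℕ, nearestIntDist ((r:ℝ)^n * tv r x m)/(r:ℝ)^n)
      - (∑' n : ℕ, nearestIntDist ((r:ℝ)^n * tu r x m)/(r:ℝ)^n))
    = (∑ n ∈ Finset.range m, tsl r x n m) + tem r x m * tcr r := by
  have hpm : (0:ℝ) < 2*(r:ℝ)^m := two_rpow_pos hr m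
  rw [F_diff hr m,
    Finset.sum_congr rfl (fun n hn => head_term hr (Finset.mem_range.mp hn)
      (le_refl _) (tu_le_tv hr m) (le_refl _)), ← Finset.sum_mul, tv_sub_tu]
  field_simp


set_option maxHeartbeats 1000000 in
lemma D_succ_eq (hr : 2 ≤ r) (hx : x ∈ Set.Icc (0:ℝ) 1) (m : ℕ) :
    2*(r:ℝ)^(m+1) * ((∑' n : ℕ, nearestIntDist ((r:ℝ)^n * tv r x (m+1))/(r:ℝ)^n)
      - (∑' n : ℕ, nearestIntDist ((r:ℝ)^n * tu r x (m+1))/(r:ℝ)^n))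
    = ((∑ n ∈ Finset.range m, tsl r x n m) + tsl r x m (m+1))
      + tem r x (m+1) * tcr r := by
  have hpm : (0:ℝ) < 2*(r:ℝ)^(m+1) := two_rpow_pos hr (m+1)
  obtain ⟨hn1, hn2⟩ := tuv_nest hr hx m
  rw [F_diff hr (m+1)]
  rw [Finset.sum_range_succ]
  rw [Finset.sum_congr rfl (fun n hn => head_term hr
      (Finset.mem_range.mp hn)
      hn1 (tu_le_tv hr (m+1)) hn2)]
  rw [head_term hr (Nat.lt_succ_self m) (le_refl _) (tu_le_tv hr (m+1)) (le_refl _)]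
  rw [← Finset.sum_mul, tv_sub_tu]
  field_simp
end


lemma gap_aux {S c a b d : ℝ} (hc : 1 ≤ c) (ha : a = 1 ∨ a = -1) (hb : b = 1 ∨ b = -1)
    (hd : d = 1 ∨ d = -1) : 1 ≤ |(S + a) + b*c - (S + d*c)| := by
  have h : (S + a) + b*c - (S + d*c) = a + (b-d)*c := by ring
  rw [h]
  rcases abs_cases (a + (b-d)*c) with ⟨he, hp⟩ | ⟨he, hp⟩ <;> rw [he] <;>
    rcases ha with rfl | rfl <;> rcases hb with rfl | rfl <;> rcases hd with rfl | rfl <;>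
    linarith

theorem stmt4 (r : ℕ) (hr : 2 ≤ r) :
    ∀ x ∈ Set.Icc (0 : ℝ) 1,
      ¬ DifferentiableWithinAt ℝ
        (fun y => ∑' n : ℕ, nearestIntDist ((r : ℝ) ^ n * y) / (r : ℝ) ^ n)
        (Set.Icc 0 1) x := by
  intro x hx hdiff
  have hrp : (0:ℝ) < (r:ℝ) := by exact_mod_cast Nat.lt_of_lt_of_le (by norm_num) hr
  set F : ℝ → ℝ := fun y => ∑' n : ℕ, nearestIntDist ((r : ℝ) ^ n * y) / (r : ℝ) ^ n with hF
  set L : ℝ := derivWithin F (Set.Icc 0 1) x with hL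
  have hder : HasDerivWithinAt F L (Set.Icc 0 1) x := hdiff.hasDerivWithinAt
  set D : ℕ → ℝ := fun m => 2*(r:ℝ)^m * (F (tv r x m) - F (tu r x m)) with hD
  have hgap : ∀ m : ℕ, 1 ≤ |D (m+1) - D m| := by
    intro m
    have e1 := D_eq (x := x) hr m
    have e2 := D_succ_eq hr hx m
    simp only [hD, hF]
    rw [e1, e2]
    exact gap_aux (tcr_ge_one hr) (tsl_cases (x := x) m (m+1))
      (tem_cases (x := x) (r := r) (m+1)) (tem_cases (x := x) (r := r) m)
  have hpm : ∀ m : ℕ, (0:ℝ) < 2*(r:ℝ)^m := fun m => two_rpow_pos hr m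
  have hux : ∀ m : ℕ, |tu r x m - x| ≤ 1/(2*(r:ℝ)^m) := by
    intro m
    have h1 := tu_le (x := x) hr m
    have h2 := le_tv hx hr m
    have h3 := tv_sub_tu (r := r) (x := x) m
    rw [abs_of_nonpos (by linarith)]; linarith
  have hvx : ∀ m : ℕ, |tv r x m - x| ≤ 1/(2*(r:ℝ)^m) := by
    intro m
    have h1 := tu_le (x := x) hr m
    have h2 := le_tv hx hr m
    have h3 := tv_sub_tu (r := r) (x := x) m
    rw [abs_of_nonneg (by linarith)]; linarith
  have hgeo : Tendsto (fun m : ℕ => 1/(2*(r:ℝ)^m)) atTop (𝓝 0) := by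
    have h0 : (fun m : ℕ => 1/(2*(r:ℝ)^m)) = fun m : ℕ => (1/2) * (1/(r:ℝ))^m := by
      funext m
      rw [div_pow, one_pow, div_mul_div_comm, one_mul]
    rw [h0]
    have h1 : (0:ℝ) ≤ 1/(r:ℝ) := by positivity
    have h2 : 1/(r:ℝ) < 1 := one_div_r_lt_one hr
    simpa using (tendsto_pow_atTop_nhds_zero_of_lt_one h1 h2).const_mul (1/2 : ℝ)
  have htu : Tendsto (tu r x) atTop (𝓝[Set.Icc (0:ℝ) 1] x) := by
    rw [tendsto_nhdsWithin_iff]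
    constructor
    · apply tendsto_sub_nhds_zero_iff.mp
      exact squeeze_zero_norm (fun m => by rw [Real.norm_eq_abs]; exact hux m) hgeo
    · exact Eventually.of_forall fun m =>
        ⟨tu_nonneg hr hx.1 m, le_trans (tu_le_tv hr m) (tv_le_one hr m)⟩
  have htv : Tendsto (tv r x) atTop (𝓝[Set.Icc (0:ℝ) 1] x) := by
    rw [tendsto_nhdsWithin_iff]
    constructor
    · apply tendsto_sub_nhds_zero_iff.mp
      exact squeeze_zero_norm (fun m => by rw [Real.norm_eq_abs]; exact hvx m) hgeo
    · exact Eventually.of_forall fun m =>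
        ⟨le_trans (tu_nonneg hr hx.1 m) (tu_le_tv hr m), tv_le_one hr m⟩
  have hDlim : Tendsto D atTop (𝓝 L) := by
    rw [Metric.tendsto_atTop]
    intro ε hε
    have hε3 : 0 < ε/3 := by linarith
    have ho := (hasDerivWithinAt_iff_isLittleO.mp hder).def hε3
    obtain ⟨N, hN⟩ := eventually_atTop.mp ((htu.eventually ho).and (htv.eventually ho))
    refine ⟨N, fun m hm => ?_⟩
    obtain ⟨h1, h2⟩ := hN m hm
    simp only [Real.norm_eq_abs, smul_eq_mul] at h1 h2
    have hone : 2*(r:ℝ)^m * (tv r x m - tu r x m) = 1 := by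
      rw [tv_sub_tu]; field_simp
    have key : D m - L = 2*(r:ℝ)^m * ((F (tv r x m) - F x - (tv r x m - x) * L)
        - (F (tu r x m) - F x - (tu r x m - x) * L)) := by
      simp only [hD]
      linear_combination L * hone
    have hbv : |F (tv r x m) - F x - (tv r x m - x) * L| ≤ ε/3 * (1/(2*(r:ℝ)^m)) :=
      le_trans h2 (mul_le_mul_of_nonneg_left (hvx m) (le_of_lt hε3))
    have hbu : |F (tu r x m) - F x - (tu r x m - x) * L| ≤ ε/3 * (1/(2*(r:ℝ)^m)) :=
      le_trans h1 (mul_le_mul_of_nonneg_left (hux m) (le_of_lt hε3))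
    rw [Real.dist_eq, key]
    have hstep : |2*(r:ℝ)^m * ((F (tv r x m) - F x - (tv r x m - x) * L)
        - (F (tu r x m) - F x - (tu r x m - x) * L))|
        ≤ 2*(r:ℝ)^m * (ε/3 * (1/(2*(r:ℝ)^m)) + ε/3 * (1/(2*(r:ℝ)^m))) := by
      rw [abs_mul, abs_of_pos (hpm m)]
      exact mul_le_mul_of_nonneg_left
        (le_trans (abs_sub _ _) (add_le_add hbv hbu)) (le_of_lt (hpm m))
    have heq : 2*(r:ℝ)^m * (ε/3 * (1/(2*(r:ℝ)^m)) + ε/3 * (1/(2*(r:ℝ)^m))) = 2*ε/3 := by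
      have hne : (2*(r:ℝ)^m) ≠ 0 := ne_of_gt (hpm m)
      field_simp
      ring
    linarith [hstep, heq ▸ hstep]
  have hlim0 : Tendsto (fun m : ℕ => D (m+1) - D m) atTop (𝓝 0) := by
    have h1 := hDlim.comp (tendsto_add_atTop_nat 1)
    have h2 := h1.sub hDlim
    simpa using h2
  obtain ⟨m, hm⟩ := (Metric.tendsto_nhds.mp hlim0 1 one_pos).exists
  rw [Real.dist_eq, sub_zero] at hm
  linarith [hgap m]
end

section
/- For the Takagi-type function T_w = ∑ₙ wₙ gₙ with nonnegative weights wₙ ≥ 0 whose partial sums diverge (w ∉ ℓ¹), if x ∈ D then for every ζ ∈ ℝ the function z ↦ T_w(z) − ζ z has a local minimum at x; in particular the (viscosity/Fréchet) subdifferential of T_w at x is all of ℝ. -/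
open Filter Topology

/-- The (viscosity/Fréchet) subdifferential of `f : ℝ → ℝ`, relative to the domain `s`,
at the point `x`: the set of `c` with
`liminf_{h → 0, x + h ∈ s} (f (x + h) - f x - c * h) / |h| ≥ 0`. -/
def subdifferentialWithin (f : ℝ → ℝ) (s : Set ℝ) (x : ℝ) : Set ℝ :=
  {c | ∀ ε > (0 : ℝ), ∀ᶠ h in 𝓝[≠] (0 : ℝ), x + h ∈ s → -ε ≤ (f (x + h) - f x - c * h) / |h|}

/-- The superdifferential `∂⁺f(x) = -∂(-f)(x)`. -/
def superdifferentialWithin (f : ℝ → ℝ) (s : Set ℝ) (x : ℝ) : Set ℝ :=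
  {c | -c ∈ subdifferentialWithin (fun y => -f y) s x}

/-- The set of midpoints of the connected components of the complement of `s` (the
bounded components being the open intervals between consecutive points of `s`). -/
def midpoints (s : Set ℝ) : Set ℝ :=
  {m | ∃ a ∈ s, ∃ b ∈ s, a < b ∧ Set.Ioo a b ∩ s = ∅ ∧ m = (a + b) / 2}

private lemma le_infDist_aux {s : Set ℝ} (hs : s.Nonempty) {x b : ℝ}
    (h : ∀ y ∈ s, b ≤ dist x y) : b ≤ Metric.infDist x s := by
  by_contra hlt
  push_neg at hlt
  obtain ⟨y, hy, hd⟩ := (Metric.infDist_lt_iff hs).mp hlt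
  exact absurd (h y hy) (not_le.mpr hd)

theorem stmt5
(D : ℕ → Set ℝ) (α : ℕ → ℝ) (ρ : ℝ) (w : ℕ → ℝ)
    (hD0 : (0 : ℝ) ∈ D 0) (hD1 : (1 : ℝ) ∈ D 0)
    (hDsub : ∀ n, D n ⊆ Set.Icc 0 1)
    (hDfin : ∀ n, (D n).Finite)
    (hDmono : ∀ n, D n ⊆ D (n + 1))
    (hρ : ρ ∈ Set.Ioc (0 : ℝ) 1)
    (hα : Summable α)
    (hgapU : ∀ n, ∀ a ∈ D n, ∀ b ∈ D n, a < b → Set.Ioo a b ∩ D n = ∅ → b - a ≤ α n)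
    (hgapL : ∀ n, ∀ a ∈ D n, ∀ b ∈ D n, a < b → ρ * α n ≤ b - a)
    (hwα : Summable (fun n => |w n * α n|))
    (hwpos : ∀ n, 0 ≤ w n) (hwns : ¬ Summable w)
    (x : ℝ) (hx : x ∈ ⋃ n, D n) :
    (∀ ζ : ℝ, IsLocalMinOn
        (fun z => (∑' n : ℕ, w n * Metric.infDist z (D n)) - ζ * z) (Set.Icc 0 1) x) ∧
      subdifferentialWithin (fun z => ∑' n : ℕ, w n * Metric.infDist z (D n))
        (Set.Icc 0 1) x = Set.univ := by
  obtain ⟨N, hxN⟩ : ∃ n, x ∈ D n := by simpa using hx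
  have hρ0 : 0 < ρ := hρ.1
  -- monotonicity of the D n
  have hmono : ∀ m n, m ≤ n → D m ⊆ D n := by
    intro m n hmn
    induction n with
    | zero =>
      have : m = 0 := Nat.le_zero.mp hmn
      simp [this]
    | succ k ih =>
      rcases Nat.lt_or_ge m (k + 1) with h | h
      · exact (ih (Nat.lt_succ_iff.mp h)).trans (hDmono k)
      · have : m = k + 1 := le_antisymm hmn h
        simp [this]
  have h0n : ∀ n, (0 : ℝ) ∈ D n := fun n => hmono 0 n (Nat.zero_le n) hD0
  have h1n : ∀ n, (1 : ℝ) ∈ D n := fun n => hmono 0 n (Nat.zero_le n) hD1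
  have hDne : ∀ n, (D n).Nonempty := fun n => ⟨0, h0n n⟩
  have hxIcc : x ∈ Set.Icc (0 : ℝ) 1 := hDsub N hxN
  -- α n is positive
  have hα0 : ∀ n, 0 < α n := by
    intro n
    classical
    set F := (hDfin n).toFinset with hF
    have h1F : (1 : ℝ) ∈ F := by simp [hF, h1n n]
    set S := F.filter (fun d => 0 < d) with hS
    have hSne : S.Nonempty := ⟨1, by simp [hS, h1F]⟩
    set b := S.min' hSne with hb
    have hbS : b ∈ S := S.min'_mem hSne
    have hbD : b ∈ D n := by
      have := (Finset.mem_filter.mp hbS).1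
      simpa [hF] using this
    have hb0 : 0 < b := (Finset.mem_filter.mp hbS).2
    have hempty : Set.Ioo (0 : ℝ) b ∩ D n = ∅ := by
      ext d
      simp only [Set.mem_inter_iff, Set.mem_Ioo, Set.mem_empty_iff_false, iff_false]
      rintro ⟨⟨hd0, hdb⟩, hdD⟩
      have hdS : d ∈ S := Finset.mem_filter.mpr ⟨by simp [hF, hdD], hd0⟩
      exact absurd (S.min'_le d hdS) (not_le.mpr hdb)
    have := hgapU n 0 (h0n n) b hbD hb0 hempty
    linarith
  -- infDist bound
  have hgle : ∀ z ∈ Set.Icc (0 : ℝ) 1, ∀ n, Metric.infDist z (D n) ≤ α n := by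
    intro z hz n
    classical
    by_cases hzD : z ∈ D n
    · have := Metric.infDist_zero_of_mem hzD
      rw [this]; exact (hα0 n).le
    set F := (hDfin n).toFinset with hF
    have h0F : (0 : ℝ) ∈ F := by simp [hF, h0n n]
    have h1F : (1 : ℝ) ∈ F := by simp [hF, h1n n]
    set Sm := F.filter (fun d => d ≤ z) with hSm
    set Sp := F.filter (fun d => z ≤ d) with hSp
    have hSmne : Sm.Nonempty := ⟨0, by simp [hSm, h0F, hz.1]⟩
    have hSpne : Sp.Nonempty := ⟨1, by simp [hSp, h1F, hz.2]⟩
    set a := Sm.max' hSmne with ha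
    set b := Sp.min' hSpne with hb
    have haS := Sm.max'_mem hSmne
    have hbS := Sp.min'_mem hSpne
    have haD : a ∈ D n := by have := (Finset.mem_filter.mp haS).1; simpa [hF] using this
    have hbD : b ∈ D n := by have := (Finset.mem_filter.mp hbS).1; simpa [hF] using this
    have haz : a ≤ z := (Finset.mem_filter.mp haS).2
    have hzb : z ≤ b := (Finset.mem_filter.mp hbS).2
    have haz' : a < z := lt_of_le_of_ne haz (fun h => hzD (h ▸ haD))
    have hzb' : z < b := lt_of_le_of_ne hzb (fun h => hzD (h ▸ hbD))
    have hempty : Set.Ioo a b ∩ D n = ∅ := by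
      ext d
      simp only [Set.mem_inter_iff, Set.mem_Ioo, Set.mem_empty_iff_false, iff_false]
      rintro ⟨⟨hda, hdb⟩, hdD⟩
      rcases le_total d z with h | h
      · have : d ∈ Sm := Finset.mem_filter.mpr ⟨by simp [hF, hdD], h⟩
        exact absurd (Sm.le_max' d this) (not_le.mpr hda)
      · have : d ∈ Sp := Finset.mem_filter.mpr ⟨by simp [hF, hdD], h⟩
        exact absurd (Sp.min'_le d this) (not_le.mpr hdb)
    have hba : b - a ≤ α n := hgapU n a haD b hbD (haz'.trans hzb') hempty
    have h6 : Metric.infDist z (D n) ≤ dist z b := Metric.infDist_le_dist_of_mem hbD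
    rw [Real.dist_eq, abs_of_nonpos (by linarith)] at h6
    linarith
  -- summability
  have hsum : ∀ z ∈ Set.Icc (0 : ℝ) 1, Summable (fun n => w n * Metric.infDist z (D n)) := by
    intro z hz
    apply Summable.of_nonneg_of_le
      (fun n => mul_nonneg (hwpos n) Metric.infDist_nonneg)
      (fun n => ?_) hwα
    calc w n * Metric.infDist z (D n) ≤ w n * α n :=
          mul_le_mul_of_nonneg_left (hgle z hz n) (hwpos n)
      _ ≤ |w n * α n| := le_abs_self _
  have hgx0 : ∀ n, N ≤ n → Metric.infDist x (D n) = 0 :=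
    fun n hn => Metric.infDist_zero_of_mem (hmono N n hn hxN)
  -- key estimate
  have key : ∀ C : ℝ, 0 ≤ C → ∃ δ > (0 : ℝ), ∀ z ∈ Set.Icc (0 : ℝ) 1, |z - x| ≤ δ →
      C * |z - x| + (∑' n : ℕ, w n * Metric.infDist x (D n))
        ≤ ∑' n : ℕ, w n * Metric.infDist z (D n) := by
    intro C hC
    classical
    set S : ℕ → ℝ := fun k => ∑ i ∈ Finset.range k, w i with hSdef
    have hS : Tendsto S atTop atTop :=
      (not_summable_iff_tendsto_nat_atTop_of_nonneg hwpos).mp hwns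
    obtain ⟨K, hK2, hK1⟩ : ∃ K, C + 2 * S N ≤ S K ∧ N + 1 ≤ K := by
      have := (hS.eventually_ge_atTop (C + 2 * S N)).and (eventually_ge_atTop (N + 1))
      exact this.exists
    have hNK : N ≤ K := by omega
    have hIcone : (Finset.Ico N K).Nonempty := by
      rw [Finset.nonempty_Ico]; omega
    set δ := (ρ * (Finset.Ico N K).inf' hIcone α) / 2 with hδdef
    have hδpos : 0 < δ := by
      obtain ⟨i, hi, heq⟩ := Finset.exists_mem_eq_inf' hIcone α
      rw [hδdef, heq]
      have := hα0 i
      positivity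
    have hδle : ∀ n ∈ Finset.Ico N K, δ ≤ ρ * α n / 2 := by
      intro n hn
      have : (Finset.Ico N K).inf' hIcone α ≤ α n := Finset.inf'_le α hn
      rw [hδdef]
      nlinarith
    refine ⟨δ, hδpos, fun z hz hzd => ?_⟩
    set f : ℕ → ℝ := fun n =>
      w n * Metric.infDist z (D n) - w n * Metric.infDist x (D n) with hfdef
    set L : ℕ → ℝ := fun n =>
      (if n < N then -(w n) else if n < K then w n else 0) * |z - x| with hLdef
    have hLf : ∀ n, L n ≤ f n := by
      intro n
      rcases Nat.lt_or_ge n N with h | h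
      · -- use Lipschitz
        have hlip : Metric.infDist x (D n) ≤ Metric.infDist z (D n) + dist x z :=
          Metric.infDist_le_infDist_add_dist
        have hd : dist x z = |z - x| := by rw [Real.dist_eq, abs_sub_comm]
        rw [hd] at hlip
        simp only [hLdef, hfdef, if_pos h]
        nlinarith [hwpos n]
      · have hxn : x ∈ D n := hmono N n h hxN
        have hgx : Metric.infDist x (D n) = 0 := hgx0 n h
        rcases Nat.lt_or_ge n K with h2 | h2
        · -- infDist z (D n) ≥ |z - x|
          have hδn : δ ≤ ρ * α n / 2 := hδle n (Finset.mem_Ico.mpr ⟨h, h2⟩)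
          have hzd2 : |z - x| ≤ ρ * α n / 2 := hzd.trans hδn
          have hge : |z - x| ≤ Metric.infDist z (D n) := by
            apply le_infDist_aux (hDne n)
            intro d hd
            rcases eq_or_ne d x with rfl | hne
            · rw [Real.dist_eq]
            · have hdx : ρ * α n ≤ |d - x| := by
                rcases lt_or_gt_of_ne hne with hlt | hgt
                · have := hgapL n d hd x hxn hlt
                  rw [abs_of_nonpos (by linarith)]; linarith
                · have := hgapL n x hxn d hd hgt
                  rw [abs_of_nonneg (by linarith)]; linarith
              have htri : |d - x| ≤ |d - z| + |z - x| := abs_sub_le d z x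
              have : dist z d = |d - z| := by rw [Real.dist_eq, abs_sub_comm]
              rw [this]
              linarith
          simp only [hLdef, hfdef, if_neg (not_lt.mpr h), if_pos h2, hgx, mul_zero, sub_zero]
          exact mul_le_mul_of_nonneg_left hge (hwpos n)
        · simp only [hLdef, hfdef, if_neg (not_lt.mpr h), if_neg (not_lt.mpr h2), hgx,
            mul_zero, sub_zero, zero_mul]
          exact mul_nonneg (hwpos n) Metric.infDist_nonneg
    have hLsupp : ∀ n ∉ Finset.range K, L n = 0 := by
      intro n hn
      rw [Finset.mem_range, not_lt] at hn
      have h1 : ¬ n < N := by omega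
      have h2 : ¬ n < K := by omega
      simp [hLdef, h1, h2]
    have hLsummable : Summable L := summable_of_ne_finset_zero hLsupp
    have hfz := hsum z hz
    have hfx := hsum x hxIcc
    have hfs : Summable f := hfz.sub hfx
    have h1 : ∑' n, L n ≤ ∑' n, f n := Summable.tsum_le_tsum hLf hLsummable hfs
    have h2 : ∑' n, f n = (∑' n, w n * Metric.infDist z (D n))
        - ∑' n, w n * Metric.infDist x (D n) := Summable.tsum_sub hfz hfx
    have h3 : ∑' n, L n = (S K - 2 * S N) * |z - x| := by
      rw [tsum_eq_sum hLsupp]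
      rw [hLdef]
      rw [← Finset.sum_mul]
      congr 1
      rw [← Finset.sum_range_add_sum_Ico _ hNK]
      have e1 : ∑ i ∈ Finset.range N, (if i < N then -(w i) else if i < K then w i else 0)
          = - S N := by
        rw [hSdef, ← Finset.sum_neg_distrib]
        apply Finset.sum_congr rfl
        intro i hi
        rw [Finset.mem_range] at hi
        simp [hi]
      have e2 : ∑ i ∈ Finset.Ico N K, (if i < N then -(w i) else if i < K then w i else 0)
          = S K - S N := by
        rw [hSdef, ← Finset.sum_Ico_eq_sub w hNK]
        apply Finset.sum_congr rfl
        intro i hi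
        rw [Finset.mem_Ico] at hi
        simp [not_lt.mpr hi.1, hi.2]
      rw [e1, e2]; ring
    have h4 : C * |z - x| ≤ (S K - 2 * S N) * |z - x| :=
      mul_le_mul_of_nonneg_right (by linarith) (abs_nonneg _)
    rw [h3] at h1
    rw [h2] at h1
    linarith
  constructor
  · intro ζ
    obtain ⟨δ, hδpos, hkey⟩ := key |ζ| (abs_nonneg ζ)
    have hball : ∀ᶠ z in 𝓝[Set.Icc (0:ℝ) 1] x, z ∈ Metric.ball x δ :=
      eventually_nhdsWithin_of_eventually_nhds
        (by exact Metric.ball_mem_nhds x hδpos)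
    filter_upwards [hball, eventually_mem_nhdsWithin] with z hz1 hz2
    have hzd : |z - x| ≤ δ := by
      rw [Metric.mem_ball, Real.dist_eq] at hz1
      linarith [le_of_lt hz1]
    have := hkey z hz2 hzd
    have habs : ζ * (z - x) ≤ |ζ| * |z - x| := by
      calc ζ * (z - x) ≤ |ζ * (z - x)| := le_abs_self _
        _ = |ζ| * |z - x| := abs_mul _ _
    nlinarith
  · ext c
    simp only [Set.mem_univ, iff_true, subdifferentialWithin, Set.mem_setOf_eq]
    intro ε hε
    obtain ⟨δ, hδpos, hkey⟩ := key |c| (abs_nonneg c)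
    have hball : ∀ᶠ h in 𝓝[≠] (0:ℝ), h ∈ Metric.ball (0:ℝ) δ :=
      eventually_nhdsWithin_of_eventually_nhds
        (by exact Metric.ball_mem_nhds (0:ℝ) hδpos)
    filter_upwards [hball, eventually_mem_nhdsWithin] with h hh1 hh2 hmem
    have hh0 : h ≠ 0 := hh2
    have hhd : |x + h - x| ≤ δ := by
      rw [Metric.mem_ball, Real.dist_eq, sub_zero] at hh1
      have : x + h - x = h := by ring
      rw [this]
      linarith [le_of_lt hh1]
    have hk := hkey (x + h) hmem hhd
    have heq : x + h - x = h := by ring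
    rw [heq] at hk
    have habs : c * h ≤ |c| * |h| := by
      calc c * h ≤ |c * h| := le_abs_self _
        _ = |c| * |h| := abs_mul _ _
    have hnum : 0 ≤ (∑' n : ℕ, w n * Metric.infDist (x + h) (D n))
        - (∑' n : ℕ, w n * Metric.infDist x (D n)) - c * h := by linarith
    have habsh : 0 < |h| := abs_pos.mpr hh0
    have : 0 ≤ ((∑' n : ℕ, w n * Metric.infDist (x + h) (D n))
        - (∑' n : ℕ, w n * Metric.infDist x (D n)) - c * h) / |h| :=
      div_nonneg hnum habsh.le
    linarith
end
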